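/- For all positive integers n, s, p, one has min(n·s, p) ≤ min(n, p) · min(s, p + 1 − min(n, p)). -/

import Mathlib

/-!
Set `m = min n p`; then `min (n * s) p` is at most both `p` and `m * s`.
If `s ≤ p + 1 - m` the second bound is the claim; otherwise the first is, because `m * (p + 1 - m) - p = (m - 1) * (p - m) ≥ 0` for `1 ≤ m ≤ p`.
-/

namespace Nat

theorem min_mul_le_min_mul (n s p : ℕ) : min (n * s) p ≤ min n p * s := by
  rcases le_total n p with hnp | hpn
  · rw [min_eq_left hnp]
    exact min_le_left _ _
  · rw [min_eq_right hpn]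
    rcases s.eq_zero_or_pos with rfl | hs
    · simp
    · exact (min_le_right _ _).trans (Nat.le_mul_of_pos_right p hs)

theorem le_mul_add_one_sub {m p : ℕ} (hm : 0 < m) (hmp : m ≤ p) : p ≤ m * (p + 1 - m) := by
  obtain ⟨k, rfl⟩ := Nat.exists_eq_add_of_le hmp
  rw [show m + k + 1 - m = k + 1 by omega]
  nlinarith

theorem min_mul_le_mul_min_add_one_sub {m p : ℕ} (s : ℕ) (hmp : m ≤ p) :
    min (m * s) p ≤ m * min s (p + 1 - m) := by
  rcases le_total s (p + 1 - m) with hs | hs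
  · rw [min_eq_left hs]
    exact min_le_left _ _
  · rw [min_eq_right hs]
    rcases m.eq_zero_or_pos with rfl | hm
    · simp
    · exact (min_le_right _ _).trans (le_mul_add_one_sub hm hmp)

end Nat

theorem stmt_0_general (n s p : ℕ) :
    min (n * s) p ≤ min n p * min s (p + 1 - min n p) :=
  calc min (n * s) p ≤ min (min n p * s) p :=
        le_min (Nat.min_mul_le_min_mul n s p) (min_le_right _ _)
    _ ≤ min n p * min s (p + 1 - min n p) :=
        Nat.min_mul_le_mul_min_add_one_sub s (min_le_right n p)

/-- For all positive integers n, s, p: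
    min(n·s, p) ≤ min(n, p) · min(s, p + 1 − min(n, p)). -/
theorem stmt_0 (n s p : ℕ) (hn : 0 < n) (hs : 0 < s) (hp : 0 < p) :
    min (n * s) p ≤ min n p * min s (p + 1 - min n p) :=
  stmt_0_general n s p
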